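/- For every nonnegative integer k, the Apéry number A_k := ∑_{j=0}^k C(k,j)^2 C(k+j,j)^2 satisfies A_k ≡ 3 − 2·(−1)^k (mod 24); that is, A_k ≡ 1 (mod 24) if k is even and A_k ≡ 5 (mod 24) if k is odd. -/

import Mathlib

/-!
Modulo 3: by Lucas' theorem the Apéry numbers satisfy Gessel's congruence
`A (p q + r) ≡ A q * A r (mod p)` for `r < p`, and `A 0, A 1, A 2 = 1, 5, 73 ≡ 1, -1, 1`.

Modulo 8: for `j ≥ 1` the number `x_j = C(k,j) C(k+j,j) = C(k+j,2j) C(2j,j)` is even, so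
`x_j² ≡ 2 x_j (mod 8)` and `A k ≡ 2 D k - 1`, where `D k = ∑ x_j` is the central Delannoy
number. Vandermonde's identity gives `D k = ∑ C(k,i)² 2^i ≡ 1 + 2k (mod 4)`.
-/

open Finset

def apery (n : ℕ) : ℕ := ∑ j ∈ range (n + 1), n.choose j ^ 2 * (n + j).choose j ^ 2

theorem apery_eq_sum_range {n N : ℕ} (h : n < N) :
    apery n = ∑ j ∈ range N, n.choose j ^ 2 * (n + j).choose j ^ 2 := by
  refine sum_subset (range_subset_range.mpr h) fun j _ hj => ?_
  rw [mem_range, not_lt] at hj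
  simp [Nat.choose_eq_zero_of_lt (Nat.lt_of_succ_le hj)]

theorem Finset.sum_range_mul_eq_sum_sum {M : Type*} [AddCommMonoid M] (f : ℕ → M) (p n : ℕ) :
    ∑ j ∈ range (p * n), f j = ∑ u ∈ range n, ∑ v ∈ range p, f (p * u + v) := by
  induction n with
  | zero => simp
  | succ n ih => rw [sum_range_succ, ← ih, Nat.mul_succ, sum_range_add]

section Lucas

variable {p : ℕ} [Fact p.Prime]

theorem Choose.cast_choose_mul_add_mul_add {a b c d : ℕ} (hb : b < p) (hd : d < p) :
    ((p * a + b).choose (p * c + d) : ZMod p) = b.choose d * a.choose c := by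
  have h := (ZMod.intCast_eq_intCast_iff _ _ p).mpr
    (Choose.choose_modEq_choose_mod_mul_choose_div (n := p * a + b) (k := p * c + d))
  have hp : 0 < p := Nat.pos_of_neZero p
  push_cast at h
  rwa [Nat.mul_add_mod, Nat.mul_add_mod, Nat.mod_eq_of_lt hb, Nat.mod_eq_of_lt hd,
    Nat.mul_add_div hp, Nat.mul_add_div hp, Nat.div_eq_of_lt hb, Nat.div_eq_of_lt hd, add_zero,
    add_zero] at h

-- When `r + v` carries past `p`, both sides vanish: the left by Lucas, the right since
-- `p ∣ (r + v).choose v`.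
theorem Choose.cast_choose_mul_add_add_mul_add {q r u v : ℕ} (hr : r < p) (hv : v < p) :
    ((p * q + r + (p * u + v)).choose (p * u + v) : ZMod p) =
      (r + v).choose v * (q + u).choose u := by
  by_cases hrv : r + v < p
  · rw [show p * q + r + (p * u + v) = p * (q + u) + (r + v) by ring]
    exact cast_choose_mul_add_mul_add hrv hv
  · rw [not_lt] at hrv
    have hdvd : p ∣ (r + v).choose v := by
      rw [← Nat.choose_symm_add]
      exact Nat.Prime.dvd_choose_add Fact.out hr hv hrv
    rw [show p * q + r + (p * u + v) = p * (q + u + 1) + (r + v - p) by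
        rw [mul_add, mul_add, mul_one]; omega,
      cast_choose_mul_add_mul_add (by omega) hv, Nat.choose_eq_zero_of_lt (by omega),
      (ZMod.natCast_eq_zero_iff _ _).mpr hdvd]
    simp

end Lucas

theorem apery_mul_add {p : ℕ} [Fact p.Prime] (q : ℕ) {r : ℕ} (hr : r < p) :
    (apery (p * q + r) : ZMod p) = apery q * apery r := by
  have hp : 0 < p := Nat.pos_of_neZero p
  rw [apery_eq_sum_range (N := p * (q + 1)) (by nlinarith), Nat.cast_sum,
    sum_range_mul_eq_sum_sum, apery, apery_eq_sum_range hr, Nat.cast_sum, Nat.cast_sum,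
    sum_mul_sum]
  refine sum_congr rfl fun u _ => sum_congr rfl fun v hv => ?_
  have hv := mem_range.mp hv
  push_cast
  rw [Choose.cast_choose_mul_add_mul_add hr hv, Choose.cast_choose_mul_add_add_mul_add hr hv]
  ring

theorem apery_cast_zmod_three (n : ℕ) : (apery n : ZMod 3) = (-1) ^ n := by
  induction n using Nat.strong_induction_on with
  | _ n ih =>
    obtain rfl | hn := Nat.eq_zero_or_pos n
    · decide
    have hr : n % 3 < 3 := Nat.mod_lt n (by norm_num)
    have small : ∀ r < 3, (apery r : ZMod 3) = (-1) ^ r := by decide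
    have h := apery_mul_add (p := 3) (n / 3) hr
    rw [Nat.div_add_mod] at h
    rw [h, ih _ (by omega), small _ hr]
    conv_rhs => rw [← Nat.div_add_mod n 3, pow_add, pow_mul]
    norm_num

def centralDelannoy (n : ℕ) : ℕ := ∑ j ∈ range (n + 1), n.choose j * (n + j).choose j

theorem Nat.sum_range_choose_mul_choose {n i : ℕ} (hi : i ≤ n) :
    ∑ j ∈ range (n + 1), n.choose j * j.choose i = n.choose i * 2 ^ (n - i) := by
  rw [show n + 1 = i + (n - i + 1) by omega, sum_range_add, ← Nat.sum_range_choose, mul_sum]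
  have hlow : ∀ j ∈ range i, n.choose j * j.choose i = 0 := fun j hj => by
    rw [Nat.choose_eq_zero_of_lt (mem_range.mp hj), mul_zero]
  rw [sum_eq_zero hlow, zero_add]
  refine sum_congr rfl fun m _ => ?_
  rw [Nat.choose_mul (Nat.le_add_right i m), Nat.add_sub_cancel_left]

theorem Nat.add_choose_eq_sum_range_choose_mul_choose {n j : ℕ} (hj : j ≤ n) :
    (n + j).choose j = ∑ i ∈ range (n + 1), n.choose i * j.choose i := by
  rw [Nat.add_choose_eq, Nat.sum_antidiagonal_eq_sum_range_succ_mk]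
  refine sum_subset_zero_on_sdiff (range_subset_range.mpr (by omega)) (fun i hi => ?_)
    (fun i hi => ?_)
  · rw [mem_sdiff, mem_range, mem_range, not_lt] at hi
    rw [Nat.choose_eq_zero_of_lt (by omega : j < i), mul_zero]
  · rw [Nat.choose_symm (Nat.le_of_lt_succ (mem_range.mp hi))]

theorem centralDelannoy_eq_sum_choose_sq_mul_two_pow (n : ℕ) :
    centralDelannoy n = ∑ i ∈ range (n + 1), n.choose i ^ 2 * 2 ^ i := by
  calc centralDelannoy n
      = ∑ j ∈ range (n + 1), ∑ i ∈ range (n + 1),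
          n.choose i * (n.choose j * j.choose i) := by
        refine sum_congr rfl fun j hj => ?_
        rw [Nat.add_choose_eq_sum_range_choose_mul_choose (Nat.le_of_lt_succ (mem_range.mp hj)),
          mul_sum]
        exact sum_congr rfl fun i _ => by ring
    _ = ∑ i ∈ range (n + 1), n.choose i ^ 2 * 2 ^ (n - i) := by
        rw [sum_comm]
        refine sum_congr rfl fun i hi => ?_
        rw [← mul_sum, Nat.sum_range_choose_mul_choose (Nat.le_of_lt_succ (mem_range.mp hi))]
        ring
    _ = ∑ i ∈ range (n + 1), n.choose i ^ 2 * 2 ^ i := by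
        rw [← sum_range_reflect]
        refine sum_congr rfl fun i hi => ?_
        have hi := mem_range.mp hi
        rw [Nat.add_sub_cancel, Nat.choose_symm (by omega), show n - (n - i) = i by omega]

theorem centralDelannoy_cast_zmod_four (n : ℕ) : (centralDelannoy n : ZMod 4) = 1 + 2 * n := by
  rw [centralDelannoy_eq_sum_choose_sq_mul_two_pow]
  obtain _ | m := n
  · decide
  have hvanish : ∀ i, (2 : ZMod 4) ^ (i + 1 + 1) = 0 := fun i => by
    rw [pow_succ, pow_succ, mul_assoc]
    exact mul_eq_zero_of_right _ (by decide)
  rw [sum_range_succ', sum_range_succ']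
  push_cast
  simp only [hvanish, mul_zero, sum_const_zero, zero_add, Nat.choose_one_right,
    Nat.choose_zero_right]
  have key : ∀ x : ZMod 4, x ^ 2 * 2 + 1 = 1 + 2 * x := by decide
  simpa using key (m + 1)

theorem two_dvd_choose_mul_add_choose {n j : ℕ} (hj : 0 < j) :
    2 ∣ n.choose j * (n + j).choose j := by
  rcases lt_or_ge n j with hnj | hjn
  · simp [Nat.choose_eq_zero_of_lt hnj]
  · have h := Nat.choose_mul (n := n + j) (k := 2 * j) (s := j) (by omega)
    rw [Nat.add_sub_cancel, show 2 * j - j = j by omega,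
      ← Nat.centralBinom_eq_two_mul_choose] at h
    rw [mul_comm, ← h]
    exact dvd_mul_of_dvd_right (Nat.two_dvd_centralBinom_of_one_le hj) _

theorem apery_cast_zmod_eight_eq_centralDelannoy (n : ℕ) :
    (apery n : ZMod 8) = 2 * centralDelannoy n - 1 := by
  have hsq : ∀ x : ℕ, 2 ∣ x → ((x ^ 2 : ℕ) : ZMod 8) = 2 * x := by
    rintro x ⟨y, rfl⟩
    have key : ∀ z : ZMod 8, (2 * z) ^ 2 = 2 * (2 * z) := by decide
    push_cast
    exact key y
  simp only [apery, centralDelannoy, ← mul_pow]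
  rw [sum_range_succ', sum_range_succ', Nat.cast_add, Nat.cast_sum, Nat.cast_add, Nat.cast_sum]
  simp only [hsq _ (two_dvd_choose_mul_add_choose (Nat.succ_pos _)), ← mul_sum]
  simp only [Nat.cast_mul, Nat.choose_zero_right, add_zero, mul_one, one_pow, Nat.cast_one]
  ring

theorem apery_cast_zmod_eight (n : ℕ) : (apery n : ZMod 8) = 1 + 4 * n := by
  have h4 : centralDelannoy n ≡ 1 + 2 * n [MOD 4] := by
    rw [← ZMod.natCast_eq_natCast_iff]
    push_cast
    exact centralDelannoy_cast_zmod_four n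
  have h8 := (ZMod.natCast_eq_natCast_iff _ _ 8).mpr (Nat.ModEq.mul_left' 2 h4)
  push_cast at h8
  rw [apery_cast_zmod_eight_eq_centralDelannoy, h8]
  ring

theorem apery_A_mod_24 (k : ℕ) :
    ((∑ j ∈ Finset.range (k + 1), (k.choose j) ^ 2 * ((k + j).choose j) ^ 2 : ℕ) : ℤ) ≡
      3 - 2 * (-1) ^ k [ZMOD 24] := by
  change ((apery k : ℕ) : ℤ) ≡ 3 - 2 * (-1) ^ k [ZMOD 24]
  rw [show (24 : ℤ) = 8 * 3 by norm_num, ← Int.modEq_and_modEq_iff_modEq_mul (by decide)]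
  refine ⟨(ZMod.intCast_eq_intCast_iff _ _ 8).mp ?_, (ZMod.intCast_eq_intCast_iff _ _ 3).mp ?_⟩
  · push_cast
    rw [apery_cast_zmod_eight]
    obtain ⟨m, rfl | rfl⟩ := Nat.even_or_odd' k <;>
      push_cast [pow_add, pow_mul, neg_one_sq, one_pow] <;>
      generalize (m : ZMod 8) = x <;> revert x <;> decide
  · push_cast
    rw [apery_cast_zmod_three]
    generalize (-1 : ZMod 3) ^ k = x
    revert x
    decide
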